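/- Let G' be a finite directed graph containing a directed path P₂ and a sequence P₁ of distinct vertices disjoint from P₂ equipped with a linear order ≤_{P₁}, such that no vertex of P₁ has an outgoing edge in G' and every edge of G' whose head lies on P₂ is an edge of P₂. Assume the crossing hypothesis: whenever W is a walk in G' from a vertex b of P₂ to a vertex p of P₁ and W' is a walk in G' from a vertex b' of P₂ to a vertex p' of P₁ with b' <_{P₂} b and p' <_{P₁} p, the walks W and W' share a vertex. Then for any two vertices x and y of P₂ such that first_{G'}(x,P₁) and first_{G'}(y,P₁) both exist, one has first_{G'}(x,P₁) = first_{G'}(y,P₁). -/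

import Mathlib

/-
Moving forward along `P₂` only enlarges the set of reachable vertices, so an earlier vertex `x`
of `P₂` has its first no later on `P₁` than the first of a later vertex `y`. Conversely, if the
first `fx` of `x` were strictly before the first `fy` of `y`, the walks `x ⇝ fx` and `y ⇝ fy`
would cross, and following the walk from `y` to the crossing vertex and then on to `fx` shows
that `y` reaches `fx`, contradicting the minimality of `fy`. So the index of the first is
monotone in both directions, hence constant.
-/

/-- A walk in the directed graph with edge relation `E`: a nonempty list of vertices
starting at `u`, ending at `v`, with every consecutive pair an edge. -/
def IsWalk {V : Type*} (E : V → V → Prop) (l : List V) (u v : V) : Prop :=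
  l ≠ [] ∧ l.head? = some u ∧ l.getLast? = some v ∧ l.Chain' E

/-- `v` is reachable from `u` in the graph with edge relation `E`. -/
def Reach {V : Type*} (E : V → V → Prop) (u v : V) : Prop :=
  ∃ l : List V, IsWalk E l u v

/-- `b` is the `≤_Q`-least vertex of the ordered vertex list `q` reachable from `s`. -/
def IsFirst {V : Type*} [DecidableEq V] (E : V → V → Prop) (s : V) (q : List V)
    (b : V) : Prop :=
  b ∈ q ∧ Reach E s b ∧ ∀ c ∈ q, Reach E s c → q.idxOf b ≤ q.idxOf c

open Relation

section Reachability

variable {V : Type*} {E : V → V → Prop}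

theorem reach_iff_reflTransGen {u v : V} : Reach E u v ↔ ReflTransGen E u v := by
  constructor
  · rintro ⟨l, hne, hhead, hlast, hc⟩
    rw [List.head?_eq_some_head hne, Option.some_inj] at hhead
    rw [List.getLast?_eq_some_getLast hne, Option.some_inj] at hlast
    exact hhead ▸ hlast ▸ List.relationReflTransGen_of_exists_isChain l hc hne
  · intro h
    obtain ⟨l, hne, hc, hhead, hlast⟩ := List.exists_isChain_ne_nil_of_relationReflTransGen h
    exact ⟨l, hne, by simp [List.head?_eq_some_head hne, hhead],
      by simp [List.getLast?_eq_some_getLast hne, hlast], hc⟩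

theorem IsWalk.reflTransGen_of_mem_left {l : List V} {u v z : V} (hw : IsWalk E l u v)
    (hz : z ∈ l) : ReflTransGen E u z := by
  obtain ⟨hne, hhead, -, hc⟩ := hw
  rw [List.head?_eq_some_head hne, Option.some_inj] at hhead
  exact hc.induction (ReflTransGen E u) l (fun _ _ h₁ h₂ => h₂.tail h₁)
    (fun _ => hhead ▸ .refl) z hz

theorem IsWalk.reflTransGen_of_mem_right {l : List V} {u v z : V} (hw : IsWalk E l u v)
    (hz : z ∈ l) : ReflTransGen E z v := by
  obtain ⟨hne, -, hlast, hc⟩ := hw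
  rw [List.getLast?_eq_some_getLast hne, Option.some_inj] at hlast
  exact hc.backwards_induction (ReflTransGen E · v) l (fun _ _ h₁ h₂ => h₂.head h₁)
    (fun _ => hlast ▸ .refl) z hz

theorem List.IsChain.reflTransGen_of_idxOf_le [DecidableEq V] {l : List V} (hc : l.IsChain E)
    {x y : V} (hx : x ∈ l) (hy : y ∈ l) (hxy : l.idxOf x ≤ l.idxOf y) :
    ReflTransGen E x y := by
  have hne : l.drop (l.idxOf x) ≠ [] := by simpa using List.idxOf_lt_length_iff.mpr hx
  have hhead : (l.drop (l.idxOf x)).head hne = x := by simp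
  have hy' : y ∈ l.drop (l.idxOf x) := by
    have hyl := List.idxOf_lt_length_iff.mpr hy
    exact List.mem_drop_iff_getElem.mpr
      ⟨l.idxOf y - l.idxOf x, by omega, by simp [Nat.add_sub_cancel' hxy]⟩
  exact (hc.drop _).induction (ReflTransGen E x) _ (fun _ _ h₁ h₂ => h₂.tail h₁)
    (fun _ => by rw [hhead]) y hy'

end Reachability

section Firsts

variable {V : Type*} [DecidableEq V] {E : V → V → Prop}

theorem IsFirst.idxOf_le {s b c : V} {q : List V} (hb : IsFirst E s q b) (hc : c ∈ q)
    (hsc : ReflTransGen E s c) : q.idxOf b ≤ q.idxOf c :=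
  hb.2.2 c hc (reach_iff_reflTransGen.mpr hsc)

theorem IsFirst.idxOf_le_of_crossing {p₂ p₁ : List V} (hp₂ : p₂.IsChain E)
    (hcross : ∀ (lw lw' : List V) (b q b' q' : V),
      b ∈ p₂ → q ∈ p₁ → b' ∈ p₂ → q' ∈ p₁ →
      IsWalk E lw b q → IsWalk E lw' b' q' →
      p₂.idxOf b' < p₂.idxOf b → p₁.idxOf q' < p₁.idxOf q →
      ∃ x, x ∈ lw ∧ x ∈ lw')
    {x y fx fy : V} (hx : x ∈ p₂) (hy : y ∈ p₂)
    (hfx : IsFirst E x p₁ fx) (hfy : IsFirst E y p₁ fy) :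
    p₁.idxOf fx ≤ p₁.idxOf fy := by
  rcases le_or_gt (p₂.idxOf x) (p₂.idxOf y) with hxy | hyx
  · have hfy_reach := reach_iff_reflTransGen.mp hfy.2.1
    exact hfx.idxOf_le hfy.1 ((hp₂.reflTransGen_of_idxOf_le hx hy hxy).trans hfy_reach)
  · by_contra! hlt
    obtain ⟨lx, hwx⟩ := hfx.2.1
    obtain ⟨ly, hwy⟩ := hfy.2.1
    obtain ⟨z, hzx, hzy⟩ := hcross lx ly x fx y fy hx hfx.1 hy hfy.1 hwx hwy hyx hlt
    have hx_fy : ReflTransGen E x fy :=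
      (hwx.reflTransGen_of_mem_left hzx).trans (hwy.reflTransGen_of_mem_right hzy)
    exact hlt.not_ge (hfx.idxOf_le hfy.1 hx_fy)

end Firsts

theorem stmt_5_general {V : Type*} [DecidableEq V] (E : V → V → Prop)
    (p₂ p₁ : List V) (hp₂ch : p₂.Chain' E)
    (hcross : ∀ (lw lw' : List V) (b q b' q' : V),
      b ∈ p₂ → q ∈ p₁ → b' ∈ p₂ → q' ∈ p₁ →
      IsWalk E lw b q → IsWalk E lw' b' q' →
      p₂.idxOf b' < p₂.idxOf b → p₁.idxOf q' < p₁.idxOf q →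
      ∃ x, x ∈ lw ∧ x ∈ lw')
    (x y fx fy : V) (hx : x ∈ p₂) (hy : y ∈ p₂)
    (hfx : IsFirst E x p₁ fx) (hfy : IsFirst E y p₁ fy) :
    fx = fy :=
  (List.idxOf_inj hfx.1).mp <| le_antisymm
    (hfx.idxOf_le_of_crossing hp₂ch hcross hx hy hfy)
    (hfy.idxOf_le_of_crossing hp₂ch hcross hy hx hfx)

/-- Under the structural hypotheses on `P₁, P₂` and the crossing
hypothesis, any two vertices of `P₂` whose firsts on `P₁` exist have the same first. -/
theorem stmt_5 {V : Type*} [Fintype V] [DecidableEq V] (E : V → V → Prop)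
    (p₂ p₁ : List V) (hp₂nd : p₂.Nodup) (hp₂ch : p₂.Chain' E) (hp₁nd : p₁.Nodup)
    (hdisj : ∀ x ∈ p₁, x ∉ p₂)
    (hnoout : ∀ x ∈ p₁, ∀ y, ¬ E x y)
    (hhead : ∀ x y, E x y → y ∈ p₂ → ∃ i, p₂[i]? = some x ∧ p₂[i+1]? = some y)
    (hcross : ∀ (lw lw' : List V) (b q b' q' : V),
      b ∈ p₂ → q ∈ p₁ → b' ∈ p₂ → q' ∈ p₁ →
      IsWalk E lw b q → IsWalk E lw' b' q' →
      p₂.idxOf b' < p₂.idxOf b → p₁.idxOf q' < p₁.idxOf q →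
      ∃ x, x ∈ lw ∧ x ∈ lw')
    (x y fx fy : V) (hx : x ∈ p₂) (hy : y ∈ p₂)
    (hfx : IsFirst E x p₁ fx) (hfy : IsFirst E y p₁ fy) :
    fx = fy :=
  stmt_5_general E p₂ p₁ hp₂ch hcross x y fx fy hx hy hfx hfy
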